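/- There is no nonempty Π⁰₁ class all of whose members are 1-generic. -/

import Mathlib

open Classical in
/-- The characteristic (total) function of a set of naturals, as a partial function. -/
noncomputable def chi (X : Set ℕ) : ℕ →. ℕ :=
  fun n => Part.some (if n ∈ X then 1 else 0)

/-- Partial functions computable relative to an oracle `O`. -/
inductive RecursiveInOracle (O : ℕ →. ℕ) : (ℕ →. ℕ) → Prop
  | zero : RecursiveInOracle O fun _ => 0
  | succ : RecursiveInOracle O Nat.succ
  | left : RecursiveInOracle O fun n => (Nat.unpair n).1
  | right : RecursiveInOracle O fun n => (Nat.unpair n).2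
  | oracle : RecursiveInOracle O O
  | pair {f g : ℕ →. ℕ} : RecursiveInOracle O f → RecursiveInOracle O g →
      RecursiveInOracle O fun n => Nat.pair <$> f n <*> g n
  | comp {f g : ℕ →. ℕ} : RecursiveInOracle O f → RecursiveInOracle O g →
      RecursiveInOracle O fun n => g n >>= f
  | prec {f g : ℕ →. ℕ} : RecursiveInOracle O f → RecursiveInOracle O g →
      RecursiveInOracle O (Nat.unpaired fun a n =>
        n.rec (f a) fun y IH => do let i ← IH; g (Nat.pair a (Nat.pair y i)))
  | rfind {f : ℕ →. ℕ} : RecursiveInOracle O f →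
      RecursiveInOracle O fun a => Nat.rfind fun n => (fun m => m = 0) <$> f (Nat.pair a n)

/-- `X ≤_T Y` : `X` is computable with oracle `Y`. -/
def TuringLE (X Y : Set ℕ) : Prop := RecursiveInOracle (chi Y) (chi X)

/-- `X` is c.e.(`Y`) : `X` is the domain of a partial function computable with oracle `Y`. -/
def CEIn (Y X : Set ℕ) : Prop := ∃ f : ℕ →. ℕ, RecursiveInOracle (chi Y) f ∧ X = f.Dom

/-- `X` is relatively c.e. -/
def RelativelyCE (X : Set ℕ) : Prop := ∃ Y : Set ℕ, CEIn Y X ∧ ¬ TuringLE X Y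

/-- A computably enumerable predicate (unrelativized). -/
def CEPred {α : Type} [Primcodable α] (p : α → Prop) : Prop :=
  ∃ f : α →. Unit, Partrec f ∧ ∀ a, p a ↔ (f a).Dom

/-- `A ≤_e B` : enumeration reducibility. -/
def EnumLE (A B : Set ℕ) : Prop :=
  ∃ C : Set (ℕ × Finset ℕ), CEPred (· ∈ C) ∧
    ∀ n, n ∈ A ↔ ∃ E : Finset ℕ, ↑E ⊆ B ∧ (n, E) ∈ C

open Classical in
/-- `X ↾ k` : the binary string of the first `k` values of the characteristic function. -/
noncomputable def seg (X : Set ℕ) (k : ℕ) : List Bool :=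
  (List.range k).map fun n => decide (n ∈ X)

/-- `X` is 1-generic. -/
def OneGeneric (X : Set ℕ) : Prop :=
  ∀ S : Set (List Bool), CEPred (· ∈ S) →
    (∃ k, seg X k ∈ S) ∨ (∃ k, ∀ σ : List Bool, seg X k <+: σ → σ ∉ S)

/-- `X` is an infinite path through the tree `T`. -/
def IsPath (T : Set (List Bool)) (X : Set ℕ) : Prop := ∀ k, seg X k ∈ T

/-- `T` is a computable tree of finite binary strings. -/
def ComputableTree (T : Set (List Bool)) : Prop :=
  (∀ σ τ : List Bool, σ ∈ T → τ <+: σ → τ ∈ T) ∧ ComputablePred (· ∈ T)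

/-!
Take a path `X` of the class. Genericity of `X` applied to the c.e. set of strings outside the
tree yields an initial segment `X ↾ k` all of whose extensions lie on the tree, so the computable
real `X ↾ k` followed by zeros is also a path. But no computable real `Y` is 1-generic: it meets
no string of the computable set `{τ | τ ≠ Y ↾ |τ|}`, yet every initial segment of `Y` has an
extension in it.
-/

lemma REPred.cePred {α : Type} [Primcodable α] {p : α → Prop} (h : REPred p) : CEPred p :=
  ⟨_, h, fun _ => ⟨fun hp => ⟨hp, trivial⟩, fun ⟨hp, _⟩ => hp⟩⟩

section Segments

open Classical

lemma seg_length (X : Set ℕ) (k : ℕ) : (seg X k).length = k := by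
  simp [seg]

lemma seg_succ (X : Set ℕ) (k : ℕ) : seg X (k + 1) = seg X k ++ [decide (k ∈ X)] := by
  simp [seg, List.range_succ]

lemma seg_prefix_seg (X : Set ℕ) {a b : ℕ} (h : a ≤ b) : seg X a <+: seg X b := by
  have : seg X a = (seg X b).take a := by
    simp [seg, ← List.map_take, List.take_range, Nat.min_eq_left h]
  exact this ▸ List.take_prefix _ _

lemma computable_seg {Y : Set ℕ} (hY : ComputablePred (· ∈ Y)) : Computable (seg Y) := by
  obtain ⟨_, hf⟩ := hY
  have hrec : seg Y = fun m => Nat.rec (motive := fun _ => List Bool) []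
      (fun n acc => acc ++ [decide (n ∈ Y)]) m := by
    funext m
    induction m with
    | zero => rfl
    | succ m ih => rw [seg_succ, ih]; congr
  rw [hrec]
  exact Computable.nat_rec Computable.id (Computable.const [])
    (Computable.list_concat.comp (Computable.snd.comp Computable.snd)
      (hf.comp (Computable.fst.comp Computable.snd))).to₂

end Segments

lemma not_oneGeneric_of_computablePred {Y : Set ℕ} (hY : ComputablePred (· ∈ Y)) :
    ¬ OneGeneric Y := by
  intro hgen
  have hseg : ComputablePred fun τ : List Bool => τ = seg Y τ.length :=
    ComputablePred.computable_iff.2 ⟨_, Primrec.eq.decide.to_comp.comp Computable.id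
      ((computable_seg hY).comp Computable.list_length), by simp⟩
  rcases hgen {τ | τ ≠ seg Y τ.length} hseg.not.to_re.cePred with ⟨m, hm⟩ | ⟨m, hm⟩
  · exact hm (by rw [seg_length])
  · classical
    have hdiff := not_not.1 <| hm (seg Y m ++ [!decide (m ∈ Y)]) (List.prefix_append _ _)
    rw [List.length_append, seg_length, List.length_singleton, seg_succ] at hdiff
    simpa using List.append_cancel_left hdiff

def ofString (σ : List Bool) : Set ℕ := {n | σ.getD n false = true}

lemma computablePred_mem_ofString (σ : List Bool) : ComputablePred (· ∈ ofString σ) :=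
  (ComputablePred.computable_iff.2 ⟨_,
    ((Primrec.list_getD false).comp (Primrec.const σ) Primrec.id).to_comp, rfl⟩)

lemma seg_ofString_length (σ : List Bool) : seg (ofString σ) σ.length = σ := by
  classical
  refine List.ext_getElem (seg_length _ _) fun n _ hn => ?_
  simp [seg, ofString, hn]

lemma isPath_ofString {T : Set (List Bool)} (hT : ∀ σ τ : List Bool, σ ∈ T → τ <+: σ → τ ∈ T)
    {σ : List Bool} (hσ : ∀ τ, σ <+: τ → τ ∈ T) : IsPath T (ofString σ) := by
  intro m
  rcases le_total m σ.length with hm | hm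
  · have hprefix := seg_prefix_seg (ofString σ) hm
    rw [seg_ofString_length] at hprefix
    exact hT _ _ (hσ σ List.prefix_rfl) hprefix
  · have hprefix := seg_prefix_seg (ofString σ) hm
    rw [seg_ofString_length] at hprefix
    exact hσ _ hprefix

lemma OneGeneric.exists_seg_forall_extension_mem {T : Set (List Bool)} {X : Set ℕ}
    (hX : OneGeneric X) (hT : CEPred (· ∉ T)) (hpath : IsPath T X) :
    ∃ k, ∀ σ : List Bool, seg X k <+: σ → σ ∈ T := by
  rcases hX {σ | σ ∉ T} hT with ⟨k, hk⟩ | ⟨k, hk⟩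
  · exact (hk (hpath k)).elim
  · exact ⟨k, fun σ hσ => not_not.1 (hk σ hσ)⟩

/-- There is no nonempty Π⁰₁ class all of whose members are 1-generic. -/
theorem no_pi01_class_of_oneGeneric :
    ¬ ∃ T : Set (List Bool), ComputableTree T ∧ (∃ X : Set ℕ, IsPath T X) ∧
      ∀ X : Set ℕ, IsPath T X → OneGeneric X := by
  rintro ⟨T, ⟨hT_closed, hT_comp⟩, ⟨X, hX⟩, hgen⟩
  obtain ⟨k, hk⟩ := (hgen X hX).exists_seg_forall_extension_mem hT_comp.not.to_re.cePred hX
  exact not_oneGeneric_of_computablePred (computablePred_mem_ofString (seg X k))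
    (hgen _ (isPath_ofString hT_closed hk))
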